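/- arXiv:2410.01458 — 3 statements merged into one kernel-verified Lean document; each statement's English description precedes it below -/
import Mathlib

section
/- Let q̂ be any Q-function and π̂ its greedy policy. Then the value function of π̂ satisfies ‖v^{π̂} − v*‖_∞ ≤ 2‖q̂ − q*‖_∞ / (1 − γ). (Greedy policy suboptimality bound from Q-function error.) -/
/-- Greedy policy suboptimality bound: ‖v^{π̂} − v*‖ ≤ 2‖q̂ − q*‖ / (1 − γ). -/
theorem greedy_policy_suboptimality {S A : Type*} [Fintype S] [Fintype A]
    [Nonempty S] [Nonempty A]
    (r : S × A → ℝ) (P : S × A → S → ℝ)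
    (hP0 : ∀ z s', 0 ≤ P z s') (hP1 : ∀ z, ∑ s', P z s' = 1)
    (γ : ℝ) (hγ0 : 0 ≤ γ) (hγ1 : γ < 1)
    (qstar : S × A → ℝ)
    (hqstar : ∀ z : S × A, qstar z = r z + γ * ∑ s', P z s' * (⨆ a', qstar (s', a')))
    (vstar : S → ℝ) (hvstar : ∀ s, vstar s = ⨆ a, qstar (s, a))
    (qhat : S × A → ℝ) (πhat : S → A)
    (hgreedy : ∀ s a, qhat (s, a) ≤ qhat (s, πhat s))
    (vπ : S → ℝ)
    (hvπ : ∀ s, vπ s = r (s, πhat s) + γ * ∑ s', P (s, πhat s) s' * vπ s') :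
    ‖vπ - vstar‖ ≤ 2 * ‖qhat - qstar‖ / (1 - γ) := by
  set ε := ‖qhat - qstar‖ with hε
  set M := ‖vπ - vstar‖ with hM
  have hεn : (0:ℝ) ≤ ε := norm_nonneg _
  have hMn : (0:ℝ) ≤ M := norm_nonneg _
  have hq : ∀ z, |qhat z - qstar z| ≤ ε := by
    intro z
    have := norm_le_pi_norm (qhat - qstar) z
    simpa [Real.norm_eq_abs] using this
  have hd : ∀ s', |vπ s' - vstar s'| ≤ M := by
    intro s'
    have := norm_le_pi_norm (vπ - vstar) s'
    simpa [Real.norm_eq_abs] using this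
  have key : ∀ s, |vπ s - vstar s| ≤ 2*ε + γ*M := by
    intro s
    have hA1 : qstar (s, πhat s) ≤ vstar s := by
      rw [hvstar]
      exact le_ciSup (f := fun a => qstar (s, a)) (Finite.bddAbove_range _) (πhat s)
    have hA2 : vstar s ≤ qstar (s, πhat s) + 2*ε := by
      rw [hvstar]
      apply ciSup_le
      intro a
      have h1 := abs_le.1 (hq (s, a))
      have h2 := abs_le.1 (hq (s, πhat s))
      have h3 := hgreedy s a
      linarith [h1.1, h1.2, h2.1, h2.2]
    have hrw : vπ s - vstar s = (qstar (s, πhat s) - vstar s)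
        + γ * ∑ s', P (s, πhat s) s' * (vπ s' - vstar s') := by
      have hq' := hqstar (s, πhat s)
      have hv' := hvπ s
      have hsum : ∑ s', P (s, πhat s) s' * (⨆ a', qstar (s', a'))
          = ∑ s', P (s, πhat s) s' * vstar s' := by
        refine Finset.sum_congr rfl fun s' _ => ?_
        rw [hvstar]
      rw [hsum] at hq'
      have hsplit : ∑ s', P (s, πhat s) s' * (vπ s' - vstar s')
          = (∑ s', P (s, πhat s) s' * vπ s') - ∑ s', P (s, πhat s) s' * vstar s' := by
        rw [← Finset.sum_sub_distrib]
        exact Finset.sum_congr rfl fun s' _ => by ring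
      rw [hsplit]
      linarith
    have hB : |∑ s', P (s, πhat s) s' * (vπ s' - vstar s')| ≤ M := by
      calc |∑ s', P (s, πhat s) s' * (vπ s' - vstar s')|
          ≤ ∑ s', |P (s, πhat s) s' * (vπ s' - vstar s')| :=
            Finset.abs_sum_le_sum_abs _ _
        _ ≤ ∑ s', P (s, πhat s) s' * M := by
            refine Finset.sum_le_sum fun s' _ => ?_
            rw [abs_mul, abs_of_nonneg (hP0 _ s')]
            exact mul_le_mul_of_nonneg_left (hd s') (hP0 _ s')
        _ = M := by rw [← Finset.sum_mul, hP1, one_mul]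
    have h1 : |qstar (s, πhat s) - vstar s| ≤ 2*ε := by
      rw [abs_le]; constructor <;> linarith
    calc |vπ s - vstar s|
        ≤ |qstar (s, πhat s) - vstar s|
          + |γ * ∑ s', P (s, πhat s) s' * (vπ s' - vstar s')| := by
          rw [hrw]; exact abs_add_le _ _
      _ ≤ 2*ε + γ*M := by
          rw [abs_mul, abs_of_nonneg hγ0]
          have := mul_le_mul_of_nonneg_left hB hγ0
          linarith
  have h2 : M ≤ 2*ε + γ*M := by
    rw [hM]
    refine (pi_norm_le_iff_of_nonneg (by nlinarith)).2 fun s => ?_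
    simpa [Real.norm_eq_abs] using key s
  rw [le_div_iff₀ (by linarith : (0:ℝ) < 1 - γ)]
  nlinarith
end

section
/- Potential-based shaping preserves optimal policies: if the reward is modified to r'(s,a,s') = r(s,a,s') + γΦ(s') − Φ(s) for a potential Φ : S → ℝ, then the optimal Q-functions satisfy q'*(s,a) = q*(s,a) − Φ(s) for all (s,a), and hence the shaped MDP has the same set of optimal greedy actions at every state. -/
/-!
Both optimal Q-functions are fixed points of Bellman optimality operators, which are
`γ`-contractions in the sup norm because a maximum over actions is `1`-Lipschitz and averaging
against a probability vector does not increase the sup norm. Shifting `q` by the potential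
turns a fixed point of the operator for `r` into one for the shaped reward: the term
`γ 𝔼[Φ(s')]` cancels against the shift of the maximum at the next state. Uniqueness of
fixed points of a contraction gives `q'* = q* - Φ`, and subtracting a state-dependent
constant does not change the maximizing actions.
-/

open Finset Function

noncomputable section

theorem abs_sum_mul_le_of_abs_le {ι : Type*} (s : Finset ι) {w x : ι → ℝ} {c : ℝ}
    (hw0 : ∀ i ∈ s, 0 ≤ w i) (hw1 : ∑ i ∈ s, w i = 1) (hx : ∀ i ∈ s, |x i| ≤ c) :
    |∑ i ∈ s, w i * x i| ≤ c :=
  calc |∑ i ∈ s, w i * x i|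
      ≤ ∑ i ∈ s, |w i * x i| := abs_sum_le_sum_abs _ _
    _ ≤ ∑ i ∈ s, w i * c := sum_le_sum fun i hi => by
        rw [abs_mul, abs_of_nonneg (hw0 i hi)]
        exact mul_le_mul_of_nonneg_left (hx i hi) (hw0 i hi)
    _ = c := by rw [← sum_mul, hw1, one_mul]

theorem dist_ciSup_le_dist {ι : Type*} [Fintype ι] [Nonempty ι] (f g : ι → ℝ) :
    dist (⨆ i, f i) (⨆ i, g i) ≤ dist f g := by
  have le_add_dist : ∀ f g : ι → ℝ, ⨆ i, f i ≤ (⨆ i, g i) + dist f g := fun f g =>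
    ciSup_le fun i =>
      calc f i ≤ g i + dist f g := by
            linarith [le_abs_self (f i - g i), Real.dist_eq (f i) (g i), dist_le_pi_dist f g i]
        _ ≤ (⨆ i, g i) + dist f g := by
            gcongr
            exact le_ciSup (Set.finite_range g).bddAbove i
  rw [Real.dist_eq, abs_sub_le_iff]
  constructor <;> linarith [le_add_dist f g, le_add_dist g f, dist_comm f g]

namespace MDP

variable {S A : Type*} [Fintype S]

def bellmanOpt (r : S × A → ℝ) (P : S × A → S → ℝ) (γ : ℝ) (q : S × A → ℝ) : S × A → ℝ :=
  fun z => r z + γ * ∑ s', P z s' * ⨆ a', q (s', a')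

/-- The paper's shaped reward `r(s, a, s') + γ Φ(s') - Φ(s)`, averaged over `s' ∼ P(· | s, a)`. -/
def shapedReward (r : S × A → ℝ) (P : S × A → S → ℝ) (γ : ℝ) (Φ : S → ℝ) : S × A → ℝ :=
  fun z => r z + γ * (∑ s', P z s' * Φ s') - Φ z.1

variable [Fintype A] [Nonempty A] {P : S × A → S → ℝ} {γ : ℝ}

theorem dist_bellmanOpt_le (hP0 : ∀ z s', 0 ≤ P z s') (hP1 : ∀ z, ∑ s', P z s' = 1)
    (hγ0 : 0 ≤ γ) (r : S × A → ℝ) (q q' : S × A → ℝ) :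
    dist (bellmanOpt r P γ q) (bellmanOpt r P γ q') ≤ γ * dist q q' := by
  refine (dist_pi_le_iff (by positivity)).2 fun z => ?_
  have hmax : ∀ s', |(⨆ a', q (s', a')) - ⨆ a', q' (s', a')| ≤ dist q q' := fun s' =>
    calc |(⨆ a', q (s', a')) - ⨆ a', q' (s', a')|
        ≤ dist (fun a' => q (s', a')) (fun a' => q' (s', a')) := dist_ciSup_le_dist _ _
      _ ≤ dist q q' := (dist_pi_le_iff dist_nonneg).2 fun a' => dist_le_pi_dist q q' (s', a')
  calc dist (bellmanOpt r P γ q z) (bellmanOpt r P γ q' z)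
      = γ * |∑ s', P z s' * ((⨆ a', q (s', a')) - ⨆ a', q' (s', a'))| := by
        simp only [bellmanOpt, Real.dist_eq, add_sub_add_left_eq_sub, ← mul_sub,
          ← sum_sub_distrib, abs_mul, abs_of_nonneg hγ0]
    _ ≤ γ * dist q q' := by
        gcongr
        exact abs_sum_mul_le_of_abs_le _ (fun s' _ => hP0 z s') (hP1 z) fun s' _ => hmax s'

theorem bellmanOpt_contractingWith (hP0 : ∀ z s', 0 ≤ P z s') (hP1 : ∀ z, ∑ s', P z s' = 1)
    (hγ0 : 0 ≤ γ) (hγ1 : γ < 1) (r : S × A → ℝ) :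
    ContractingWith ⟨γ, hγ0⟩ (bellmanOpt r P γ) :=
  ⟨hγ1, LipschitzWith.of_dist_le_mul (dist_bellmanOpt_le hP0 hP1 hγ0 r)⟩

theorem bellmanOpt_shapedReward (r : S × A → ℝ) (Φ : S → ℝ) (q : S × A → ℝ) :
    bellmanOpt (shapedReward r P γ Φ) P γ (fun z => q z - Φ z.1)
      = fun z => bellmanOpt r P γ q z - Φ z.1 := by
  funext z
  have hmax : ∀ s', ⨆ a', (q (s', a') - Φ s') = (⨆ a', q (s', a')) - Φ s' := fun s' =>
    (ciSup_sub (Set.finite_range _).bddAbove _).symm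
  simp only [bellmanOpt, shapedReward, hmax, mul_sub, sum_sub_distrib]
  ring

end MDP

end

theorem potential_shaping_preserves_optimal_policy_general {S A : Type*} [Fintype S] [Fintype A]
    [Nonempty A]
    (r : S × A → ℝ) (P : S × A → S → ℝ)
    (hP0 : ∀ z s', 0 ≤ P z s') (hP1 : ∀ z, ∑ s', P z s' = 1)
    (γ : ℝ) (hγ0 : 0 ≤ γ) (hγ1 : γ < 1)
    (Φ : S → ℝ)
    (r' : S × A → ℝ)
    (hr' : ∀ z : S × A, r' z = r z + γ * (∑ s', P z s' * Φ s') - Φ z.1)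
    (qstar q'star : S × A → ℝ)
    (hq : ∀ z : S × A, qstar z = r z + γ * ∑ s', P z s' * (⨆ a', qstar (s', a')))
    (hq' : ∀ z : S × A, q'star z = r' z + γ * ∑ s', P z s' * (⨆ a', q'star (s', a'))) :
    (∀ z : S × A, q'star z = qstar z - Φ z.1) ∧
      (∀ s, {a : A | ∀ b, q'star (s, b) ≤ q'star (s, a)}
            = {a : A | ∀ b, qstar (s, b) ≤ qstar (s, a)}) := by
  have hfix : IsFixedPt (MDP.bellmanOpt r P γ) qstar := (funext hq).symm
  have hfix' : IsFixedPt (MDP.bellmanOpt r' P γ) q'star := (funext hq').symm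
  have hshifted : IsFixedPt (MDP.bellmanOpt r' P γ) (fun z => qstar z - Φ z.1) := by
    rw [show r' = MDP.shapedReward r P γ Φ from funext hr', IsFixedPt,
      MDP.bellmanOpt_shapedReward, hfix.eq]
  have hshift : q'star = fun z => qstar z - Φ z.1 :=
    (MDP.bellmanOpt_contractingWith hP0 hP1 hγ0 hγ1 r').fixedPoint_unique' hfix' hshifted
  refine ⟨congrFun hshift, fun s => ?_⟩
  ext a
  simp only [hshift, Set.mem_ofPred_eq, sub_le_sub_iff_right]

/-- Potential-based reward shaping: the shaped optimal Q-function differs from the original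
by the potential, q'*(s,a) = q*(s,a) − Φ(s), hence the greedy (optimal) action sets agree. -/
theorem potential_shaping_preserves_optimal_policy {S A : Type*} [Fintype S] [Fintype A]
    [Nonempty S] [Nonempty A]
    (r : S × A → ℝ) (P : S × A → S → ℝ)
    (hP0 : ∀ z s', 0 ≤ P z s') (hP1 : ∀ z, ∑ s', P z s' = 1)
    (γ : ℝ) (hγ0 : 0 ≤ γ) (hγ1 : γ < 1)
    (Φ : S → ℝ)
    (r' : S × A → ℝ)
    (hr' : ∀ z : S × A, r' z = r z + γ * (∑ s', P z s' * Φ s') - Φ z.1)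
    (qstar q'star : S × A → ℝ)
    (hq : ∀ z : S × A, qstar z = r z + γ * ∑ s', P z s' * (⨆ a', qstar (s', a')))
    (hq' : ∀ z : S × A, q'star z = r' z + γ * ∑ s', P z s' * (⨆ a', q'star (s', a'))) :
    (∀ z : S × A, q'star z = qstar z - Φ z.1) ∧
      (∀ s, {a : A | ∀ b, q'star (s, b) ≤ q'star (s, a)}
            = {a : A | ∀ b, qstar (s, b) ≤ qstar (s, a)}) :=
  potential_shaping_preserves_optimal_policy_general r P hP0 hP1 γ hγ0 hγ1 Φ r' hr' qstar q'star hq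
    hq'
end

section
/- If the empirical MDP satisfies ‖r̂ − r‖_∞ ≤ ε_r and max_{(s,a)} ‖P̂(·|s,a) − P(·|s,a)‖_1 ≤ ε_P, then the optimal Q-functions of the two MDPs satisfy ‖q̂* − q*‖_∞ ≤ (ε_r + γ ε_P · V_max) / (1 − γ), where V_max = max ‖q*‖_∞-type bound on values, e.g., V_max = 1/(1 − γ) when rewards lie in [0,1]. -/
lemma abs_ciSup_le {A : Type*} [Fintype A] [Nonempty A] (f : A → ℝ) (C : ℝ)
    (h : ∀ a, |f a| ≤ C) : |⨆ a, f a| ≤ C := by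
  have hbdd : BddAbove (Set.range f) := (Set.finite_range f).bddAbove
  rw [abs_le]
  constructor
  · obtain ⟨a⟩ := (inferInstance : Nonempty A)
    exact le_trans (abs_le.mp (h a)).1 (le_ciSup hbdd a)
  · exact ciSup_le fun a => (abs_le.mp (h a)).2

lemma ciSup_sub_ciSup_le {A : Type*} [Fintype A] [Nonempty A] (f g : A → ℝ) (D : ℝ)
    (h : ∀ a, f a - g a ≤ D) : (⨆ a, f a) - ⨆ a, g a ≤ D := by
  have hbdd : BddAbove (Set.range g) := (Set.finite_range g).bddAbove
  rw [sub_le_iff_le_add]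
  exact ciSup_le fun a => by have := le_ciSup hbdd a; have := h a; linarith

lemma q_norm_bound {S A : Type*} [Fintype S] [Fintype A] [Nonempty S] [Nonempty A]
    (r : S × A → ℝ) (hr : ∀ z, r z ∈ Set.Icc (0 : ℝ) 1)
    (P : S × A → S → ℝ) (hP0 : ∀ z s', 0 ≤ P z s') (hP1 : ∀ z, ∑ s', P z s' = 1)
    (γ : ℝ) (hγ0 : 0 ≤ γ) (hγ1 : γ < 1)
    (q : S × A → ℝ)
    (hq : ∀ z : S × A, q z = r z + γ * ∑ s', P z s' * (⨆ a', q (s', a'))) :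
    ‖q‖ ≤ 1 / (1 - γ) := by
  have h1γ : 0 < 1 - γ := by linarith
  set M := ‖q‖ with hM
  have hM0 : 0 ≤ M := norm_nonneg q
  have hstep : M ≤ 1 + γ * M := by
    have : ∀ z : S × A, |q z| ≤ 1 + γ * M := by
      intro z
      have hv : ∀ s', |⨆ a', q (s', a')| ≤ M := fun s' =>
        abs_ciSup_le _ _ fun a' => norm_le_pi_norm q (s', a')
      have hsum : |∑ s', P z s' * (⨆ a', q (s', a'))| ≤ M := by
        calc |∑ s', P z s' * (⨆ a', q (s', a'))|
            ≤ ∑ s', |P z s' * (⨆ a', q (s', a'))| := Finset.abs_sum_le_sum_abs _ _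
          _ ≤ ∑ s', P z s' * M := by
              apply Finset.sum_le_sum; intro s' _
              rw [abs_mul, abs_of_nonneg (hP0 z s')]
              exact mul_le_mul_of_nonneg_left (hv s') (hP0 z s')
          _ = M := by rw [← Finset.sum_mul, hP1 z, one_mul]
      have hrz := hr z
      rw [hq z]
      calc |r z + γ * ∑ s', P z s' * (⨆ a', q (s', a'))|
          ≤ |r z| + |γ * ∑ s', P z s' * (⨆ a', q (s', a'))| := abs_add_le _ _
        _ ≤ 1 + γ * M := by
            rw [abs_mul, abs_of_nonneg hγ0]
            have : |r z| ≤ 1 := abs_le.mpr ⟨by linarith [hrz.1], hrz.2⟩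
            nlinarith [hsum, hγ0]
    exact (pi_norm_le_iff_of_nonneg (by nlinarith)).mpr fun z => this z
  rw [le_div_iff₀ h1γ]
  nlinarith

/-- Simulation lemma: closeness of rewards and transitions implies closeness of the optimal
Q-functions, ‖q̂* − q*‖ ≤ (ε_r + γ ε_P V_max)/(1 − γ) with V_max = 1/(1 − γ). -/
theorem empirical_mdp_q_error_bound {S A : Type*} [Fintype S] [Fintype A]
    [Nonempty S] [Nonempty A]
    (r rhat : S × A → ℝ) (hr : ∀ z, r z ∈ Set.Icc (0 : ℝ) 1)
    (hrhat : ∀ z, rhat z ∈ Set.Icc (0 : ℝ) 1)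
    (P Phat : S × A → S → ℝ)
    (hP0 : ∀ z s', 0 ≤ P z s') (hP1 : ∀ z, ∑ s', P z s' = 1)
    (hPhat0 : ∀ z s', 0 ≤ Phat z s') (hPhat1 : ∀ z, ∑ s', Phat z s' = 1)
    (γ : ℝ) (hγ0 : 0 ≤ γ) (hγ1 : γ < 1)
    (qstar qhatstar : S × A → ℝ)
    (hq : ∀ z : S × A, qstar z = r z + γ * ∑ s', P z s' * (⨆ a', qstar (s', a')))
    (hqhat : ∀ z : S × A, qhatstar z = rhat z + γ * ∑ s', Phat z s' * (⨆ a', qhatstar (s', a')))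
    (εr εP : ℝ)
    (hεr : ∀ z, |rhat z - r z| ≤ εr)
    (hεP : ∀ z, ∑ s', |Phat z s' - P z s'| ≤ εP) :
    ‖qhatstar - qstar‖ ≤ (εr + γ * εP * (1 / (1 - γ))) / (1 - γ) := by
  have h1γ : 0 < 1 - γ := by linarith
  obtain ⟨z0⟩ := (inferInstance : Nonempty (S × A))
  have hεr0 : 0 ≤ εr := le_trans (abs_nonneg _) (hεr z0)
  have hεP0 : 0 ≤ εP :=
    le_trans (Finset.sum_nonneg fun s' _ => abs_nonneg _) (hεP z0)
  set D := ‖qhatstar - qstar‖ with hD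
  have hD0 : 0 ≤ D := norm_nonneg _
  have hMhat : ‖qhatstar‖ ≤ 1 / (1 - γ) :=
    q_norm_bound rhat hrhat Phat hPhat0 hPhat1 γ hγ0 hγ1 qhatstar hqhat
  -- pointwise bound on the gap of value functions
  have hvgap : ∀ s' : S, |(⨆ a', qhatstar (s', a')) - ⨆ a', qstar (s', a')| ≤ D := by
    intro s'
    have hptw : ∀ a', |qhatstar (s', a') - qstar (s', a')| ≤ D := fun a' => by
      have := norm_le_pi_norm (qhatstar - qstar) (s', a')
      simpa using this
    rw [abs_le]
    constructor
    · have := ciSup_sub_ciSup_le (fun a' => qstar (s', a')) (fun a' => qhatstar (s', a')) D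
        (fun a' => by linarith [(abs_le.mp (hptw a')).1])
      linarith
    · exact ciSup_sub_ciSup_le _ _ D fun a' => (abs_le.mp (hptw a')).2
  have hvhat : ∀ s' : S, |⨆ a', qhatstar (s', a')| ≤ 1 / (1 - γ) := fun s' =>
    abs_ciSup_le _ _ fun a' => le_trans (norm_le_pi_norm qhatstar (s', a')) hMhat
  have key : ∀ z : S × A, |qhatstar z - qstar z| ≤ εr + γ * (εP * (1 / (1 - γ)) + D) := by
    intro z
    set vh : S → ℝ := fun s' => ⨆ a', qhatstar (s', a') with hvh
    set v : S → ℝ := fun s' => ⨆ a', qstar (s', a') with hv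
    have hsum : ∑ s', ((Phat z s' - P z s') * vh s' + P z s' * (vh s' - v s'))
        = (∑ s', Phat z s' * vh s') - ∑ s', P z s' * v s' := by
      rw [← Finset.sum_sub_distrib]
      exact Finset.sum_congr rfl fun s' _ => by ring
    have e : qhatstar z - qstar z
        = (rhat z - r z) + γ * ∑ s', ((Phat z s' - P z s') * vh s' + P z s' * (vh s' - v s')) := by
      rw [hsum, hqhat z, hq z]; ring
    have hbound : |∑ s', ((Phat z s' - P z s') * vh s' + P z s' * (vh s' - v s'))|
        ≤ εP * (1 / (1 - γ)) + D := by
      calc |∑ s', ((Phat z s' - P z s') * vh s' + P z s' * (vh s' - v s'))|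
          ≤ ∑ s', |(Phat z s' - P z s') * vh s' + P z s' * (vh s' - v s')| :=
            Finset.abs_sum_le_sum_abs _ _
        _ ≤ ∑ s', (|Phat z s' - P z s'| * (1 / (1 - γ)) + P z s' * D) := by
            apply Finset.sum_le_sum; intro s' _
            calc |(Phat z s' - P z s') * vh s' + P z s' * (vh s' - v s')|
                ≤ |(Phat z s' - P z s') * vh s'| + |P z s' * (vh s' - v s')| := abs_add_le _ _
              _ ≤ |Phat z s' - P z s'| * (1 / (1 - γ)) + P z s' * D := by
                  rw [abs_mul, abs_mul, abs_of_nonneg (hP0 z s')]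
                  gcongr
                  · exact hvhat s'
                  · exact hP0 z s'
                  · exact hvgap s'
        _ = (∑ s', |Phat z s' - P z s'|) * (1 / (1 - γ)) + (∑ s', P z s') * D := by
            rw [Finset.sum_add_distrib, Finset.sum_mul, Finset.sum_mul]
        _ ≤ εP * (1 / (1 - γ)) + D := by
            rw [hP1 z, one_mul]
            gcongr
            exact hεP z
    calc |qhatstar z - qstar z|
        = |(rhat z - r z) + γ * ∑ s', ((Phat z s' - P z s') * vh s' + P z s' * (vh s' - v s'))| := by
          rw [e]
      _ ≤ |rhat z - r z| + γ * |∑ s', ((Phat z s' - P z s') * vh s' + P z s' * (vh s' - v s'))| := by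
          refine le_trans (abs_add_le _ _) ?_
          rw [abs_mul, abs_of_nonneg hγ0]
      _ ≤ εr + γ * (εP * (1 / (1 - γ)) + D) := by
          gcongr
          exact hεr z
  have hDstep : D ≤ εr + γ * (εP * (1 / (1 - γ)) + D) := by
    refine (pi_norm_le_iff_of_nonneg ?_).mpr fun z => by simpa using key z
    positivity
  rw [le_div_iff₀ h1γ]
  nlinarith
end
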